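/- Let (X,d) be a p-uniformly convex space with parameter c and T₁, T₂ : X → X firmly nonexpansive with a common fixed point u. Take x₀ ∈ X with d(x₀, u) ≤ b, and define x_{n+1} = T_{n(mod 2)+1} x_n. Then for every ε with 0 < ε < 2b and every n ≥ 2·⌊(2/c)·(4p·b^p/(c·ε^p))^p⌋, one has d(x_n, x_{n+1}) ≤ ε. In particular the map ε ↦ θ(ε) = 2⌊(2/c)(4pb^p/(cε^p))^p⌋ (and 0 for ε ≥ 2b) is an explicit polynomial rate of asymptotic regularity. -/

import Mathlib

/-!
Firm nonexpansiveness tested along the geodesic from `z` to `T z`, together with `p`-uniform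
convexity at the fixed point `u` and the limit of the geodesic parameter to `1`, gives the
descent inequality `d(Tz, u)^p + (c/2) d(z, Tz)^p ≤ d(z, u)^p`. Along the iteration the
distances to `u` therefore decrease and `∑ d(xᵢ, xᵢ₊₁)^p ≤ (2/c) b^p`. Since the maps alternate,
`xₙ₊₃` and `xₙ₊₁` are images of `xₙ₊₂` and `xₙ` under the same map, so `eₙ = d(xₙ, xₙ₊₂)` is
nonincreasing and `(n+1) eₙ^p ≤ ∑_{i ≤ n} eᵢ^p ≤ 2^{p+1} b^p / c`. Finally, by the mean value
theorem, `(c/2) d(xₙ, xₙ₊₁)^p ≤ d(xₙ, u)^p - d(xₙ₊₂, u)^p ≤ p b^{p-1} eₙ`.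
-/

open Filter Topology Metric Set

/-- A (chosen) geodesic bicombing witnessing that `X` is a geodesic space:
`geo x y t` is the point at parameter fraction `t ∈ [0,1]` on a geodesic from `x` to `y`. -/
structure Geodesic (X : Type*) [MetricSpace X] where
  geo : X → X → ℝ → X
  geo_zero : ∀ x y, geo x y 0 = x
  geo_one : ∀ x y, geo x y 1 = y
  geo_dist : ∀ x y : X, ∀ s ∈ Set.Icc (0:ℝ) 1, ∀ t ∈ Set.Icc (0:ℝ) 1,
    dist (geo x y s) (geo x y t) = |s - t| * dist x y

def PUnifConvex {X : Type*} [MetricSpace X] (G : Geodesic X) (p c : ℝ) : Prop :=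
  ∀ x y z : X, ∀ t ∈ Set.Icc (0:ℝ) 1,
    dist z (G.geo x y t) ^ p ≤ (1 - t) * dist z x ^ p + t * dist z y ^ p
      - c / 2 * (t * (1 - t)) * dist x y ^ p

def FirmlyNonexpansive {X : Type*} [MetricSpace X] (G : Geodesic X) (T : X → X) : Prop :=
  ∀ x y : X, ∀ lam ∈ Set.Ico (0:ℝ) 1,
    dist (T x) (T y) ≤ dist (G.geo x (T x) lam) (G.geo y (T y) lam)

lemma Geodesic.geo_self {X : Type*} [MetricSpace X] (G : Geodesic X) (u : X) {t : ℝ}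
    (ht : t ∈ Set.Icc (0 : ℝ) 1) : G.geo u u t = u := by
  simpa [G.geo_zero] using G.geo_dist u u t ht 0 ⟨le_rfl, zero_le_one⟩

namespace FirmlyNonexpansive

variable {X : Type*} [MetricSpace X] {G : Geodesic X} {T : X → X}

theorem dist_le (hT : FirmlyNonexpansive G T) (x y : X) : dist (T x) (T y) ≤ dist x y := by
  simpa only [G.geo_zero] using hT x y 0 ⟨le_rfl, zero_lt_one⟩

theorem dist_rpow_add_le {p c : ℝ} (hT : FirmlyNonexpansive G T) (hpc : PUnifConvex G p c)
    (hp : 0 ≤ p) {u : X} (hu : T u = u) (z : X) :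
    dist (T z) u ^ p + c / 2 * dist z (T z) ^ p ≤ dist z u ^ p := by
  have key : ∀ t ∈ Set.Ico (0 : ℝ) 1,
      dist (T z) u ^ p + t * (c / 2 * dist z (T z) ^ p) ≤ dist z u ^ p := by
    rintro t ⟨ht0, ht1⟩
    have hfirm : dist (T z) u ≤ dist u (G.geo z (T z) t) := by
      have := hT z u t ⟨ht0, ht1⟩
      rwa [hu, G.geo_self u ⟨ht0, ht1.le⟩, dist_comm (G.geo _ _ _)] at this
    have hconv := hpc z (T z) u t ⟨ht0, ht1.le⟩
    rw [dist_comm u z, dist_comm u (T z)] at hconv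
    have hfirm_p := Real.rpow_le_rpow dist_nonneg hfirm hp
    have : (1 - t) * (dist (T z) u ^ p + t * (c / 2 * dist z (T z) ^ p))
        ≤ (1 - t) * dist z u ^ p := by linarith
    exact le_of_mul_le_mul_left this (by linarith)
  have hlim : Tendsto (fun t => dist (T z) u ^ p + t * (c / 2 * dist z (T z) ^ p)) (𝓝[<] 1)
      (𝓝 (dist (T z) u ^ p + 1 * (c / 2 * dist z (T z) ^ p))) :=
    ((continuous_const.add (continuous_id.mul continuous_const)).tendsto 1).mono_left
      nhdsWithin_le_nhds
  simpa using le_of_tendsto hlim (eventually_of_mem (Ico_mem_nhdsLT zero_lt_one) key)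

end FirmlyNonexpansive

lemma Real.rpow_sub_rpow_le_mul_sub {p M a b : ℝ} (hp : 1 ≤ p) (hb : 0 ≤ b) (hba : b ≤ a)
    (haM : a ≤ M) : a ^ p - b ^ p ≤ p * M ^ (p - 1) * (a - b) := by
  refine (convex_Icc 0 M).image_sub_le_mul_sub_of_deriv_le
    (Real.continuous_rpow_const (by linarith)).continuousOn
    (Real.differentiable_rpow_const hp).differentiableOn ?_ b ⟨hb, hba.trans haM⟩ a
    ⟨hb.trans hba, haM⟩ hba
  intro t ht
  rw [interior_Icc] at ht
  rw [Real.deriv_rpow_const]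
  gcongr <;> linarith [ht.1, ht.2]

lemma Real.rpow_add_le_mul_rpow_add_rpow {p a b : ℝ} (hp : 1 ≤ p) (ha : 0 ≤ a)
    (hb : 0 ≤ b) :
    (a + b) ^ p ≤ 2 ^ (p - 1) * (a ^ p + b ^ p) := by
  lift a to NNReal using ha
  lift b to NNReal using hb
  exact_mod_cast NNReal.rpow_add_le_mul_rpow_add_rpow a b hp

section Iteration

variable {X : Type*} [MetricSpace X] {G : Geodesic X} {p c b : ℝ} {S : ℕ → X → X} {u : X}
  {x : ℕ → X}

theorem antitone_dist_iterate_fixedPoint (hS : ∀ n, FirmlyNonexpansive G (S n))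
    (hSu : ∀ n, S n u = u) (hx : ∀ n, x (n + 1) = S n (x n)) :
    Antitone fun n => dist (x n) u :=
  antitone_nat_of_succ_le fun n => by
    simpa only [hx n, hSu n] using (hS n).dist_le (x n) u

theorem sum_dist_iterate_rpow_le (hS : ∀ n, FirmlyNonexpansive G (S n))
    (hSu : ∀ n, S n u = u) (hx : ∀ n, x (n + 1) = S n (x n)) (hpc : PUnifConvex G p c)
    (hp : 0 ≤ p) (hb : dist (x 0) u ≤ b) (m : ℕ) :
    c / 2 * ∑ i ∈ Finset.range m, dist (x i) (x (i + 1)) ^ p ≤ b ^ p := by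
  have hstep (i : ℕ) := (hS i).dist_rpow_add_le hpc hp (hSu i) (x i)
  calc c / 2 * ∑ i ∈ Finset.range m, dist (x i) (x (i + 1)) ^ p
      = ∑ i ∈ Finset.range m, c / 2 * dist (x i) (x (i + 1)) ^ p := Finset.mul_sum _ _ _
    _ ≤ ∑ i ∈ Finset.range m, (dist (x i) u ^ p - dist (x (i + 1)) u ^ p) :=
        Finset.sum_le_sum fun i _ => by linarith [hx i ▸ hstep i]
    _ = dist (x 0) u ^ p - dist (x m) u ^ p := Finset.sum_range_sub' _ _
    _ ≤ b ^ p := by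
        have hm : 0 ≤ dist (x m) u ^ p := Real.rpow_nonneg dist_nonneg p
        linarith [Real.rpow_le_rpow dist_nonneg hb hp]

theorem antitone_dist_iterate_two (hS : ∀ n, FirmlyNonexpansive G (S n))
    (hper : ∀ n, S (n + 2) = S n) (hx : ∀ n, x (n + 1) = S n (x n)) :
    Antitone fun n => dist (x n) (x (n + 2)) :=
  antitone_nat_of_succ_le fun n => by
    simpa only [hx n, show n + 1 + 2 = n + 2 + 1 by ring, hx (n + 2), hper] using
      (hS n).dist_le (x n) (x (n + 2))

theorem succ_mul_dist_iterate_two_rpow_le (hS : ∀ n, FirmlyNonexpansive G (S n))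
    (hSu : ∀ n, S n u = u) (hper : ∀ n, S (n + 2) = S n) (hx : ∀ n, x (n + 1) = S n (x n))
    (hpc : PUnifConvex G p c) (hp : 1 ≤ p) (hc : 0 < c) (hb : dist (x 0) u ≤ b) (n : ℕ) :
    (n + 1) * dist (x n) (x (n + 2)) ^ p ≤ 2 ^ (p + 1) / c * b ^ p := by
  set d : ℕ → ℝ := fun i => dist (x i) (x (i + 1)) ^ p
  have hd (i : ℕ) : 0 ≤ d i := Real.rpow_nonneg dist_nonneg p
  have hsum : ∑ i ∈ Finset.range (n + 2), d i ≤ 2 / c * b ^ p := by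
    have := sum_dist_iterate_rpow_le hS hSu hx hpc (by linarith) hb (n + 2)
    rw [div_mul_eq_mul_div, le_div_iff₀ hc]
    linarith
  have hsum_init : ∑ i ∈ Finset.range (n + 1), d i ≤ ∑ i ∈ Finset.range (n + 2), d i := by
    rw [Finset.sum_range_succ _ (n + 1)]
    linarith [hd (n + 1)]
  have hsum_tail :
      ∑ i ∈ Finset.range (n + 1), d (i + 1) ≤ ∑ i ∈ Finset.range (n + 2), d i := by
    rw [Finset.sum_range_succ' _ (n + 1)]
    linarith [hd 0]
  have htwo (i : ℕ) : dist (x i) (x (i + 2)) ^ p ≤ 2 ^ (p - 1) * (d i + d (i + 1)) :=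
    (Real.rpow_le_rpow dist_nonneg (dist_triangle _ (x (i + 1)) _) (by linarith)).trans
      (Real.rpow_add_le_mul_rpow_add_rpow hp dist_nonneg dist_nonneg)
  calc (n + 1) * dist (x n) (x (n + 2)) ^ p
      = ∑ _i ∈ Finset.range (n + 1), dist (x n) (x (n + 2)) ^ p := by simp
    _ ≤ ∑ i ∈ Finset.range (n + 1), dist (x i) (x (i + 2)) ^ p :=
        Finset.sum_le_sum fun i hi => Real.rpow_le_rpow dist_nonneg
          (antitone_dist_iterate_two hS hper hx (Finset.mem_range_succ_iff.mp hi)) (by linarith)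
    _ ≤ ∑ i ∈ Finset.range (n + 1), 2 ^ (p - 1) * (d i + d (i + 1)) :=
        Finset.sum_le_sum fun i _ => htwo i
    _ = 2 ^ (p - 1) *
          (∑ i ∈ Finset.range (n + 1), d i + ∑ i ∈ Finset.range (n + 1), d (i + 1)) := by
        rw [← Finset.mul_sum, Finset.sum_add_distrib]
    _ ≤ 2 ^ (p - 1) * (2 * (2 / c * b ^ p)) := by gcongr; linarith
    _ = 2 ^ (p + 1) / c * b ^ p := by
        rw [Real.rpow_add two_pos, Real.rpow_sub two_pos, Real.rpow_one]
        field_simp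

theorem dist_iterate_two_le (hS : ∀ n, FirmlyNonexpansive G (S n))
    (hSu : ∀ n, S n u = u) (hper : ∀ n, S (n + 2) = S n) (hx : ∀ n, x (n + 1) = S n (x n))
    (hpc : PUnifConvex G p c) (hp : 1 ≤ p) (hc : 0 < c) (hb : dist (x 0) u ≤ b)
    {δ : ℝ} (hδ : 0 < δ) {n : ℕ} (hn : 2 / c * (2 * b / δ) ^ p < n + 1) :
    dist (x n) (x (n + 2)) ≤ δ := by
  have hb0 : 0 ≤ b := dist_nonneg.trans hb
  have hδp : 0 < δ ^ p := Real.rpow_pos_of_pos hδ p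
  have hn' : 2 ^ (p + 1) / c * b ^ p < (n + 1) * δ ^ p := by
    rw [Real.div_rpow (by positivity) hδ.le, Real.mul_rpow zero_le_two hb0] at hn
    rw [Real.rpow_add two_pos, Real.rpow_one]
    calc 2 ^ p * 2 / c * b ^ p = 2 / c * (2 ^ p * b ^ p / δ ^ p) * δ ^ p := by field_simp
      _ < (n + 1) * δ ^ p := by gcongr
  have hlt : dist (x n) (x (n + 2)) ^ p < δ ^ p := lt_of_mul_lt_mul_left
    ((succ_mul_dist_iterate_two_rpow_le hS hSu hper hx hpc hp hc hb n).trans_lt hn')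
    (by positivity)
  exact ((Real.rpow_lt_rpow_iff dist_nonneg hδ.le (by linarith)).mp hlt).le

theorem dist_iterate_succ_le (hS : ∀ n, FirmlyNonexpansive G (S n))
    (hSu : ∀ n, S n u = u) (hper : ∀ n, S (n + 2) = S n) (hx : ∀ n, x (n + 1) = S n (x n))
    (hpc : PUnifConvex G p c) (hp : 1 ≤ p) (hc : 0 < c) (hb0 : 0 < b) (hb : dist (x 0) u ≤ b)
    {ε : ℝ} (hε : 0 < ε) {n : ℕ} (hn : 2 / c * (4 * p * b ^ p / (c * ε ^ p)) ^ p < n + 1) :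
    dist (x n) (x (n + 1)) ≤ ε := by
  set δ := c * ε ^ p / (2 * p * b ^ (p - 1)) with hδ_def
  have hbp : b ^ p = b ^ (p - 1) * b := by rw [Real.rpow_sub_one hb0.ne']; field_simp
  have hδ : 0 < δ := by positivity
  have hbδ : 2 * b / δ = 4 * p * b ^ p / (c * ε ^ p) := by
    rw [hδ_def, hbp]; field_simp; ring
  have he := dist_iterate_two_le hS hSu hper hx hpc hp hc hb hδ (hbδ ▸ hn)
  have hanti := antitone_dist_iterate_fixedPoint hS hSu hx
  have hstep := (hS n).dist_rpow_add_le hpc (by linarith) (hSu n) (x n)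
  rw [← hx n] at hstep
  have hdp : c / 2 * dist (x n) (x (n + 1)) ^ p ≤ c / 2 * ε ^ p := calc
    c / 2 * dist (x n) (x (n + 1)) ^ p ≤ dist (x n) u ^ p - dist (x (n + 1)) u ^ p := by linarith
    _ ≤ dist (x n) u ^ p - dist (x (n + 2)) u ^ p := by
        gcongr
        exact hanti (Nat.le_succ _)
    _ ≤ p * b ^ (p - 1) * (dist (x n) u - dist (x (n + 2)) u) :=
        Real.rpow_sub_rpow_le_mul_sub hp dist_nonneg (hanti (by omega))
          ((hanti (Nat.zero_le n)).trans hb)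
    _ ≤ p * b ^ (p - 1) * δ := by
        gcongr
        exact (le_abs_self _).trans ((abs_dist_sub_le _ _ u).trans he)
    _ = c / 2 * ε ^ p := by rw [hδ_def]; field_simp
  exact (Real.rpow_le_rpow_iff dist_nonneg hε.le (by linarith)).mp
    (le_of_mul_le_mul_left hdp (by positivity))

end Iteration

/-- Explicit polynomial rate of asymptotic regularity for the alternating iteration of two
firmly nonexpansive mappings with a common fixed point in a `p`-uniformly convex space. -/
theorem rate_of_asymptotic_regularity {X : Type*} [MetricSpace X]
    (G : Geodesic X) (p c : ℝ) (hp : 1 < p) (hc : 0 < c)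
    (hpc : PUnifConvex G p c)
    (T₁ T₂ : X → X) (hT₁ : FirmlyNonexpansive G T₁) (hT₂ : FirmlyNonexpansive G T₂)
    (u : X) (hu₁ : T₁ u = u) (hu₂ : T₂ u = u)
    (x₀ : X) (b : ℝ) (hb : 0 < b) (hx₀ : dist x₀ u ≤ b)
    (x : ℕ → X) (hx0 : x 0 = x₀)
    (hx : ∀ n : ℕ, x (n + 1) = if n % 2 = 0 then T₁ (x n) else T₂ (x n)) :
    ∀ ε : ℝ, 0 < ε → ε < 2 * b → ∀ n : ℕ,
      (n : ℝ) ≥ 2 * (⌊(2 / c) * ((4 * p * b ^ p) / (c * ε ^ p)) ^ p⌋ : ℝ) →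
      dist (x n) (x (n + 1)) ≤ ε := by
  intro ε hε _ n hn
  set S : ℕ → X → X := fun n => if n % 2 = 0 then T₁ else T₂
  have hS (n : ℕ) : FirmlyNonexpansive G (S n) := by dsimp only [S]; split_ifs <;> assumption
  have hSu (n : ℕ) : S n u = u := by dsimp only [S]; split_ifs <;> assumption
  have hper (n : ℕ) : S (n + 2) = S n := by simp only [S, Nat.add_mod_right]
  have hxS (n : ℕ) : x (n + 1) = S n (x n) := by rw [hx n]; dsimp only [S]; split_ifs <;> rfl
  refine dist_iterate_succ_le hS hSu hper hxS hpc hp.le hc hb (hx0 ▸ hx₀) hε ?_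
  have hfloor := Int.lt_floor_add_one ((2 / c) * ((4 * p * b ^ p) / (c * ε ^ p)) ^ p)
  have hfloor_nonneg : (0 : ℝ) ≤ ⌊(2 / c) * ((4 * p * b ^ p) / (c * ε ^ p)) ^ p⌋ := by
    exact_mod_cast Int.floor_nonneg.mpr (by positivity)
  linarith
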